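/- If V is a multiplicative partial isometry, then V₁₃*V₁₃V₂₃ = V₂₃V₁₂*V₁₂. -/
import Mathlib


open Matrix

namespace MPIpaper

variable {n : Type*} [Fintype n] [DecidableEq n]

noncomputable section

/-- `W₁₂ = W ⊗ 1` on `H ⊗ H ⊗ H`. -/
def leg12 (V : Matrix (n × n) (n × n) ℂ) : Matrix (n × n × n) (n × n × n) ℂ :=
  Matrix.of fun p q => V (p.1, p.2.1) (q.1, q.2.1) * (if p.2.2 = q.2.2 then (1 : ℂ) else 0)

/-- `W₂₃ = 1 ⊗ W` on `H ⊗ H ⊗ H`. -/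
def leg23 (V : Matrix (n × n) (n × n) ℂ) : Matrix (n × n × n) (n × n × n) ℂ :=
  Matrix.of fun p q => (if p.1 = q.1 then (1 : ℂ) else 0) * V p.2 q.2

/-- `W₁₃ = (1⊗Σ)(W⊗1)(1⊗Σ)` on `H ⊗ H ⊗ H`. -/
def leg13 (V : Matrix (n × n) (n × n) ℂ) : Matrix (n × n × n) (n × n × n) ℂ :=
  Matrix.of fun p q => V (p.1, p.2.2) (q.1, q.2.2) * (if p.2.1 = q.2.1 then (1 : ℂ) else 0)

/-- A multiplicative partial isometry: `VV*V = V`, the pentagon equation, and the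
three auxiliary (hexagon-type) equations. -/
def IsMPI (V : Matrix (n × n) (n × n) ℂ) : Prop :=
  V * Vᴴ * V = V ∧
  leg23 V * leg12 V = leg12 V * leg13 V * leg23 V ∧
  leg13 V * leg23 V * (leg23 V)ᴴ = (leg12 V)ᴴ * leg12 V * leg13 V ∧
  leg12 V * (leg12 V)ᴴ * leg23 V = leg23 V * leg12 V * (leg12 V)ᴴ ∧
  leg12 V * (leg23 V)ᴴ * leg23 V = (leg23 V)ᴴ * leg23 V * leg12 V

/-- `λ(ω) = (ω ⊗ id)(V)`. -/
def lam (ω : Matrix n n ℂ →ₗ[ℂ] ℂ) (V : Matrix (n × n) (n × n) ℂ) : Matrix n n ℂ :=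
  Matrix.of fun i j => ω (Matrix.of fun a b => V (a, i) (b, j))

/-- `ρ(ω) = (id ⊗ ω)(V)`. -/
def rho (ω : Matrix n n ℂ →ₗ[ℂ] ℂ) (V : Matrix (n × n) (n × n) ℂ) : Matrix n n ℂ :=
  Matrix.of fun i j => ω (Matrix.of fun a b => V (i, a) (j, b))

/-- `1 ⊗ X` on `H ⊗ H`. -/
def oneTensor (X : Matrix n n ℂ) : Matrix (n × n) (n × n) ℂ :=
  Matrix.of fun p q => (if p.1 = q.1 then (1 : ℂ) else 0) * X p.2 q.2

/-- `X ⊗ 1` on `H ⊗ H`. -/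
def tensorOne (X : Matrix n n ℂ) : Matrix (n × n) (n × n) ℂ :=
  Matrix.of fun p q => X p.1 q.1 * (if p.2 = q.2 then (1 : ℂ) else 0)

/-- `Δ(X) = V (X ⊗ 1) V*`. -/
def Delta (V : Matrix (n × n) (n × n) ℂ) (X : Matrix n n ℂ) : Matrix (n × n) (n × n) ℂ :=
  V * tensorOne X * Vᴴ

/-- `Δ̂(X) = V* (1 ⊗ X) V`. -/
def hatDelta (V : Matrix (n × n) (n × n) ℂ) (X : Matrix n n ℂ) : Matrix (n × n) (n × n) ℂ :=
  Vᴴ * oneTensor X * V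

/-- `(ω ⊗ ω')(W)` for an operator `W` on `H ⊗ H`. -/
def applyBoth (ω ω' : Matrix n n ℂ →ₗ[ℂ] ℂ) (W : Matrix (n × n) (n × n) ℂ) : ℂ :=
  ω (Matrix.of fun i j => ω' (Matrix.of fun k l => W (i, k) (j, l)))

end


section AuxLemmas
variable {n : Type*} [Fintype n] [DecidableEq n]

lemma leg12_mul (A B : Matrix (n × n) (n × n) ℂ) : leg12 (A * B) = leg12 A * leg12 B := by
  ext ⟨i, j, k⟩ ⟨i', j', k'⟩
  simp [leg12, Matrix.mul_apply, Fintype.sum_prod_type, mul_assoc, mul_comm, mul_left_comm,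
    Finset.mul_sum, Finset.sum_mul]

lemma leg12_conjT (A : Matrix (n × n) (n × n) ℂ) : (leg12 A)ᴴ = leg12 Aᴴ := by
  ext ⟨i, j, k⟩ ⟨i', j', k'⟩
  simp [leg12, Matrix.conjTranspose_apply, eq_comm, apply_ite (starRingEnd ℂ)]

lemma leg23_mul (A B : Matrix (n × n) (n × n) ℂ) : leg23 (A * B) = leg23 A * leg23 B := by
  ext ⟨i, j, k⟩ ⟨i', j', k'⟩
  simp [leg23, Matrix.mul_apply, Fintype.sum_prod_type, mul_assoc, mul_comm, mul_left_comm,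
    Finset.mul_sum, Finset.sum_mul]

lemma leg23_conjT (A : Matrix (n × n) (n × n) ℂ) : (leg23 A)ᴴ = leg23 Aᴴ := by
  ext ⟨i, j, k⟩ ⟨i', j', k'⟩
  simp [leg23, Matrix.conjTranspose_apply, eq_comm, apply_ite (starRingEnd ℂ)]

end AuxLemmas

theorem statement5 (V : Matrix (n × n) (n × n) ℂ) (hV : IsMPI V) :
    (leg13 V)ᴴ * leg13 V * leg23 V = leg23 V * (leg12 V)ᴴ * leg12 V := by
  obtain ⟨h1, pent, h3, _h4, h5⟩ := hV
  set A := leg12 V with hAdef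
  set B := leg23 V with hBdef
  set C := leg13 V with hCdef
  have hA : A * Aᴴ * A = A := by
    rw [hAdef, leg12_conjT, ← leg12_mul, ← leg12_mul, h1]
  have hB : B * Bᴴ * B = B := by
    rw [hBdef, leg23_conjT, ← leg23_mul, ← leg23_mul, h1]
  have hAC : A * C = B * A * Bᴴ := by
    calc A * C = A * Aᴴ * A * C := by rw [hA]
      _ = A * (Aᴴ * A * C) := by simp only [mul_assoc]
      _ = A * (C * B * Bᴴ) := by rw [h3]
      _ = A * C * B * Bᴴ := by simp only [mul_assoc]
      _ = B * A * Bᴴ := by rw [← pent]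
  have h5' : Bᴴ * (B * Aᴴ) = Aᴴ * (Bᴴ * B) := by
    have := congrArg Matrix.conjTranspose h5
    simpa [Matrix.conjTranspose_mul, mul_assoc] using this
  calc Cᴴ * C * B
      = Cᴴ * C * (B * Bᴴ * B) := by rw [hB]
    _ = Cᴴ * (C * B * Bᴴ) * B := by simp only [mul_assoc]
    _ = Cᴴ * (Aᴴ * A * C) * B := by rw [h3]
    _ = Cᴴ * Aᴴ * (A * C * B) := by simp only [mul_assoc]
    _ = Cᴴ * Aᴴ * (B * A) := by rw [← pent]
    _ = (A * C)ᴴ * (B * A) := by rw [Matrix.conjTranspose_mul]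
    _ = (B * A * Bᴴ)ᴴ * (B * A) := by rw [hAC]
    _ = B * Aᴴ * (Bᴴ * (B * A)) := by
        simp only [Matrix.conjTranspose_mul, Matrix.conjTranspose_conjTranspose, mul_assoc]
    _ = B * Aᴴ * (Bᴴ * B * A) := by simp only [mul_assoc]
    _ = B * Aᴴ * (A * Bᴴ * B) := by rw [← h5]
    _ = B * (Aᴴ * A * (Bᴴ * B)) := by simp only [mul_assoc]
    _ = B * (Bᴴ * (B * Aᴴ)) * A := by
        have h5'' : A * (Bᴴ * B) = Bᴴ * (B * A) := by simpa only [mul_assoc] using h5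
        rw [h5']
        simp only [mul_assoc, h5'']
    _ = B * Bᴴ * B * Aᴴ * A := by simp only [mul_assoc]
    _ = B * Aᴴ * A := by rw [hB]


end MPIpaper
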